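/- arXiv:1609.05720 — 8 statements merged into one kernel-verified Lean document; each statement's English description precedes it below -/
import Mathlib

section
/- Let 𝕂 be a field of characteristic 0, p ∈ 𝕂[x₁,…,xₙ], ω a polynomial in n variables, and ξ ∈ 𝕂ⁿ. Let p(ξ+∂)(ω) denote the polynomial obtained by substituting each variable xᵢ of p by the operator ξᵢ·id + ∂/∂yᵢ (these operators pairwise commute) and applying the resulting operator to ω. Then p ⋆ (ω·e_ξ) = (p(ξ+∂)(ω))·e_ξ; equivalently, for every q ∈ 𝕂[x₁,…,xₙ] one has (ω(∂)(p·q))(ξ) = ((p(ξ+∂)(ω))(∂)q)(ξ). -/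
/-! Since the partial derivatives commute, `ω ↦ ω(∂)` is a `𝕂`-algebra homomorphism from
`𝕂[y]` to `End 𝕂[x]`, and hence so is `p ↦ p(ξ + ∂)`. Leibniz' rule gives the commutator
`[ω(∂), xᵢ] = (∂ᵢω)(∂)`; evaluating at `ξ` yields `xᵢ ⋆ (ω·e_ξ) = (∂ᵢω + ξᵢω)·e_ξ`, which is the
case `p = xᵢ`. As `(p·q) ⋆ σ = q ⋆ (p ⋆ σ)`, induction on `p` gives the general case. -/

open MvPolynomial

namespace PolyExp

variable {K : Type*} [Field K] {n : ℕ}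

/-- The iterated partial derivative operator `∂^β` on polynomials. -/
noncomputable def pderivPow (β : Fin n →₀ ℕ) :
    Module.End K (MvPolynomial (Fin n) K) :=
  (List.ofFn fun i : Fin n =>
    ((MvPolynomial.pderiv i).toLinearMap : Module.End K (MvPolynomial (Fin n) K)) ^ (β i)).prod

/-- The constant coefficient differential operator `ω(∂) = Σ_β ω_β ∂^β`. -/
noncomputable def diffOp (ω : MvPolynomial (Fin n) K) :
    Module.End K (MvPolynomial (Fin n) K) :=
  ∑ β ∈ ω.support, ω.coeff β • pderivPow β

/-- The evaluation linear form `e_ξ : p ↦ p(ξ)`. -/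
noncomputable def evalDual (ξ : Fin n → K) : Module.Dual K (MvPolynomial (Fin n) K) :=
  (MvPolynomial.aeval ξ).toLinearMap

/-- The polynomial-exponential linear form `ω·e_ξ : p ↦ (ω(∂)p)(ξ)`. -/
noncomputable def polyExpDual (ω : MvPolynomial (Fin n) K) (ξ : Fin n → K) :
    Module.Dual K (MvPolynomial (Fin n) K) :=
  evalDual ξ ∘ₗ diffOp ω

/-- The Hankel operator `H_σ : p ↦ (q ↦ σ(p·q))`. -/
noncomputable def hankel (σ : Module.Dual K (MvPolynomial (Fin n) K)) :
    MvPolynomial (Fin n) K →ₗ[K] Module.Dual K (MvPolynomial (Fin n) K) :=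
  (LinearMap.llcomp K (MvPolynomial (Fin n) K) (MvPolynomial (Fin n) K) K σ) ∘ₗ
    (LinearMap.mul K (MvPolynomial (Fin n) K))

/-- `μ(ω)`: the dimension of the span of all partial derivatives of `ω`. -/
noncomputable def mu (ω : MvPolynomial (Fin n) K) : ℕ :=
  Module.finrank K (Submodule.span K (Set.range fun β : Fin n →₀ ℕ => pderivPow β ω))

/-- The kernel `I_σ` of the Hankel operator, as an ideal. -/
def hankelKer (σ : Module.Dual K (MvPolynomial (Fin n) K)) : Ideal (MvPolynomial (Fin n) K) where
  carrier := {p | ∀ q, σ (p * q) = 0}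
  add_mem' := by
    intro a b ha hb q
    rw [add_mul, map_add, ha q, hb q, add_zero]
  zero_mem' := by
    intro q
    rw [zero_mul, map_zero]
  smul_mem' := by
    intro c p hp q
    rw [smul_eq_mul, mul_comm c p, mul_assoc]
    exact hp (c * q)

end PolyExp

open IsMulCommutative in
theorem List.prod_ofFn_pow_add {M : Type*} [Monoid M] {m : ℕ} (f : Fin m → M)
    (hf : ∀ i j, Commute (f i) (f j)) (β γ : Fin m → ℕ) :
    (List.ofFn fun i => f i ^ (β i + γ i)).prod =
      (List.ofFn fun i => f i ^ β i).prod * (List.ofFn fun i => f i ^ γ i).prod := by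
  -- compute in the commutative submonoid generated by the `f i`
  have := Submonoid.isMulCommutative_closure M (s := Set.range f)
    (by rintro _ ⟨i, rfl⟩ _ ⟨j, rfl⟩; exact hf i j)
  let g (i : Fin m) : Submonoid.closure (Set.range f) := ⟨f i, Submonoid.subset_closure ⟨i, rfl⟩⟩
  have prod_eq (β : Fin m → ℕ) : (List.ofFn fun i => f i ^ β i).prod = ↑(∏ i, g i ^ β i) := by
    rw [← List.prod_ofFn, ← Submonoid.coe_subtype, map_list_prod, List.map_ofFn]
    rfl
  rw [prod_eq, prod_eq, prod_eq, ← Submonoid.coe_mul, ← Finset.prod_mul_distrib]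
  simp only [pow_add]

theorem List.prod_ofFn_pow_single {M : Type*} [Monoid M] {m : ℕ} (f : Fin m → M) (i : Fin m)
    (k : ℕ) : (List.ofFn fun j => f j ^ (Pi.single i k : Fin m → ℕ) j).prod = f i ^ k := by
  induction m with
  | zero => exact i.elim0
  | succ m ih =>
    rw [List.ofFn_succ, List.prod_cons]
    cases i using Fin.cases with
    | zero => simp
    | succ i => simpa [Pi.single_apply, (Fin.succ_ne_zero i).symm] using ih (fun j => f j.succ) i

theorem MvPolynomial.pderiv_pderiv_comm {σ R : Type*} [CommRing R] (i j : σ)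
    (p : MvPolynomial σ R) :
    pderiv i (pderiv j p) = pderiv j (pderiv i p) := by
  classical
  have : ⁅pderiv i, pderiv j⁆ = (0 : Derivation R (MvPolynomial σ R) (MvPolynomial σ R)) :=
    MvPolynomial.derivation_ext fun k => by
      rw [Derivation.commutator_apply, pderiv_X, pderiv_X, Pi.single_apply, Pi.single_apply]
      split_ifs <;> simp
  rw [← sub_eq_zero, ← Derivation.commutator_apply, this, Derivation.zero_apply]

namespace PolyExp

variable {K : Type*} [Field K] {n : ℕ}

theorem pderivPow_add (β γ : Fin n →₀ ℕ) :
    (pderivPow (β + γ) : Module.End K (MvPolynomial (Fin n) K)) = pderivPow β * pderivPow γ :=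
  List.prod_ofFn_pow_add _ (fun i j => LinearMap.ext (pderiv_pderiv_comm i j)) β γ

theorem pderivPow_zero : (pderivPow 0 : Module.End K (MvPolynomial (Fin n) K)) = 1 := by
  simp [pderivPow]

theorem pderivPow_single (i : Fin n) (k : ℕ) :
    (pderivPow (Finsupp.single i k) : Module.End K (MvPolynomial (Fin n) K)) =
      (pderiv i).toLinearMap ^ k := by
  simp only [pderivPow, Finsupp.single_eq_pi_single]
  exact List.prod_ofFn_pow_single _ i k

variable (K n) in
noncomputable def pderivPowHom :
    Multiplicative (Fin n →₀ ℕ) →* Module.End K (MvPolynomial (Fin n) K) where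
  toFun β := pderivPow β.toAdd
  map_one' := pderivPow_zero
  map_mul' β γ := pderivPow_add β.toAdd γ.toAdd

variable (K n) in
noncomputable def diffOpAlgHom :
    MvPolynomial (Fin n) K →ₐ[K] Module.End K (MvPolynomial (Fin n) K) :=
  AddMonoidAlgebra.lift K _ _ (pderivPowHom K n)

theorem coe_diffOpAlgHom : ⇑(diffOpAlgHom K n) = diffOp := by
  ext1 ω
  rw [diffOpAlgHom, AddMonoidAlgebra.lift_apply]
  rfl

theorem diffOp_add (a b : MvPolynomial (Fin n) K) : diffOp (a + b) = diffOp a + diffOp b := by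
  simp only [← coe_diffOpAlgHom, map_add]

theorem diffOp_mul (a b : MvPolynomial (Fin n) K) : diffOp (a * b) = diffOp a * diffOp b := by
  simp only [← coe_diffOpAlgHom, map_mul]

theorem diffOp_C (c : K) : diffOp (C c : MvPolynomial (Fin n) K) = algebraMap K _ c := by
  rw [← coe_diffOpAlgHom, ← algebraMap_eq, AlgHom.commutes]

theorem diffOp_monomial (β : Fin n →₀ ℕ) (c : K) : diffOp (monomial β c) = c • pderivPow β := by
  rw [← coe_diffOpAlgHom]
  exact AddMonoidAlgebra.lift_single _ _ _

theorem diffOp_X (i : Fin n) :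
    diffOp (X i : MvPolynomial (Fin n) K) = (pderiv i).toLinearMap := by
  rw [X, diffOp_monomial, one_smul, pderivPow_single, pow_one]

theorem pderiv_mul_mulLeft (i : Fin n) (a : MvPolynomial (Fin n) K) :
    (pderiv i).toLinearMap * LinearMap.mulLeft K a =
      LinearMap.mulLeft K a * (pderiv i).toLinearMap + LinearMap.mulLeft K (pderiv i a) := by
  refine LinearMap.ext fun q => ?_
  show pderiv i (a * q) = a * pderiv i q + pderiv i a * q
  rw [pderiv_mul, add_comm]

theorem diffOp_mul_mulLeft_X (ω : MvPolynomial (Fin n) K) (i : Fin n) :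
    diffOp ω * LinearMap.mulLeft K (X i) =
      LinearMap.mulLeft K (X i) * diffOp ω + diffOp (pderiv i ω) := by
  induction ω using MvPolynomial.induction_on with
  | C c => rw [diffOp_C, Algebra.commutes, pderiv_C, ← C_0, diffOp_C, map_zero, add_zero]
  | add a b ha hb => rw [diffOp_add, add_mul, ha, hb, map_add, diffOp_add, mul_add]; abel
  | mul_X a j ha =>
    have hδ : diffOp (pderiv i (X j : MvPolynomial (Fin n) K)) =
        LinearMap.mulLeft K (pderiv j (X i)) := by
      rcases eq_or_ne i j with rfl | hij
      · rw [pderiv_X_self, LinearMap.mulLeft_one, ← C_1, diffOp_C, map_one, Module.End.one_eq_id]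
      · rw [pderiv_X_of_ne hij, pderiv_X_of_ne hij.symm, LinearMap.mulLeft_zero_eq_zero, ← C_0,
          diffOp_C, map_zero]
    rw [diffOp_mul, diffOp_X, mul_assoc, pderiv_mul_mulLeft, mul_add, ← mul_assoc, ha, pderiv_mul,
      diffOp_add, diffOp_mul, diffOp_mul, hδ, diffOp_X]
    noncomm_ring

theorem polyExpDual_add (a b : MvPolynomial (Fin n) K) (ξ : Fin n → K) :
    polyExpDual (a + b) ξ = polyExpDual a ξ + polyExpDual b ξ := by
  rw [polyExpDual, diffOp_add, LinearMap.comp_add]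
  rfl

theorem polyExpDual_smul (c : K) (a : MvPolynomial (Fin n) K) (ξ : Fin n → K) :
    polyExpDual (c • a) ξ = c • polyExpDual a ξ := by
  rw [polyExpDual, ← coe_diffOpAlgHom, map_smul, LinearMap.comp_smul]
  rfl

theorem hankel_mul (σ : Module.Dual K (MvPolynomial (Fin n) K)) (p q : MvPolynomial (Fin n) K) :
    hankel σ (p * q) = hankel (hankel σ p) q :=
  LinearMap.ext fun r => congrArg σ (mul_assoc p q r)

theorem hankel_C (σ : Module.Dual K (MvPolynomial (Fin n) K)) (c : K) :
    hankel σ (C c) = c • σ :=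
  LinearMap.ext fun r => by
    rw [LinearMap.smul_apply, ← map_smul, smul_eq_C_mul]
    rfl

theorem hankel_polyExpDual_X (ω : MvPolynomial (Fin n) K) (ξ : Fin n → K) (i : Fin n) :
    hankel (polyExpDual ω ξ) (X i) = polyExpDual (pderiv i ω + ξ i • ω) ξ := by
  refine LinearMap.ext fun q => ?_
  have hcomm := congrArg (fun T : Module.End K _ => aeval ξ (T q)) (diffOp_mul_mulLeft_X ω i)
  simp only [Module.End.mul_apply, LinearMap.add_apply, LinearMap.mulLeft_apply, map_add,
    map_mul, aeval_X] at hcomm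
  rw [polyExpDual_add, polyExpDual_smul, LinearMap.add_apply, LinearMap.smul_apply, smul_eq_mul]
  exact hcomm.trans (add_comm _ _)

/-- `p ↦ p(ξ + ∂)`. -/
noncomputable def shiftedDiffOp (ξ : Fin n → K) :
    MvPolynomial (Fin n) K →ₐ[K] Module.End K (MvPolynomial (Fin n) K) :=
  (diffOpAlgHom K n).comp (aeval fun i => X i + C (ξ i))

theorem shiftedDiffOp_X (ξ : Fin n → K) (i : Fin n) (ω : MvPolynomial (Fin n) K) :
    shiftedDiffOp ξ (X i) ω = pderiv i ω + ξ i • ω := by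
  rw [shiftedDiffOp, AlgHom.comp_apply, aeval_X, coe_diffOpAlgHom, diffOp_add, diffOp_X, diffOp_C,
    Algebra.algebraMap_eq_smul_one, LinearMap.add_apply, LinearMap.smul_apply, Module.End.one_apply]
  rfl

theorem hankel_polyExpDual (p ω : MvPolynomial (Fin n) K) (ξ : Fin n → K) :
    hankel (polyExpDual ω ξ) p = polyExpDual (shiftedDiffOp ξ p ω) ξ := by
  induction p using MvPolynomial.induction_on generalizing ω with
  | C c =>
    rw [hankel_C, ← algebraMap_eq, AlgHom.commutes, Algebra.algebraMap_eq_smul_one,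
      LinearMap.smul_apply, Module.End.one_apply, polyExpDual_smul]
  | add p q hp hq => rw [map_add, hp, hq, map_add, LinearMap.add_apply, polyExpDual_add]
  | mul_X p i hp =>
    rw [hankel_mul, hp, hankel_polyExpDual_X, ← shiftedDiffOp_X, ← Module.End.mul_apply,
      ← map_mul, mul_comm]

end PolyExp

theorem statement0_general {K : Type*} [Field K] {n : ℕ}
    (p ω : MvPolynomial (Fin n) K) (ξ : Fin n → K) :
    PolyExp.hankel (PolyExp.polyExpDual ω ξ) p =
      PolyExp.polyExpDual
        (PolyExp.diffOp ((MvPolynomial.aeval fun i => MvPolynomial.X i + MvPolynomial.C (ξ i)) p) ω)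
        ξ :=
  PolyExp.hankel_polyExpDual p ω ξ

/-- For a field `𝕂` of characteristic 0, `p ⋆ (ω·e_ξ) = (p(ξ+∂)(ω))·e_ξ`,
where `p(ξ+∂)` is the differential operator obtained from the shifted polynomial
`p(ξ + y) = Σ_β c_β y^β`, i.e. substituting each variable `xᵢ` of `p` by `ξᵢ·id + ∂ᵢ`. -/
theorem statement0 {K : Type*} [Field K] [CharZero K] {n : ℕ}
    (p ω : MvPolynomial (Fin n) K) (ξ : Fin n → K) :
    PolyExp.hankel (PolyExp.polyExpDual ω ξ) p =
      PolyExp.polyExpDual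
        (PolyExp.diffOp ((MvPolynomial.aeval fun i => MvPolynomial.X i + MvPolynomial.C (ξ i)) p) ω)
        ξ :=
  statement0_general p ω ξ
end

section
/- Let 𝕂 be a field of characteristic 0 and ω a polynomial in n variables y₁,…,yₙ. Write ω(y+t) = Σ_{α∈A,β∈B} θ_{α,β} y^α t^β in the polynomial ring in the 2n variables y₁,…,yₙ,t₁,…,tₙ, where A, B ⊂ ℕⁿ are finite sets containing the supports. Then μ(ω) equals the rank of the matrix Θ = (θ_{α,β})_{α∈A,β∈B}. -/
open MvPolynomial

/-- The expansion `ω(y+t)` of `ω` in the `2n` variables `y₁,…,yₙ,t₁,…,tₙ`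
(`Sum.inl` indices are the `y`-variables, `Sum.inr` indices the `t`-variables). -/
noncomputable def shiftExpand {K : Type*} [Field K] {n : ℕ} (ω : MvPolynomial (Fin n) K) :
    MvPolynomial (Fin n ⊕ Fin n) K :=
  MvPolynomial.aeval (fun i => MvPolynomial.X (Sum.inl i) + MvPolynomial.X (Sum.inr i)) ω

/-! Taylor's formula: the coefficient `θ_{α,β}` of `y^α t^β` in `ω(y+t)` is `(∂^β ω)_α / β!`.
Indeed `∂/∂t_i` commutes with the substitution `y ↦ y + t`, turning into `∂/∂y_i`, and setting
`t = 0` recovers `ω`. Rescaling the columns of `Θ` by the units `β!` (characteristic `0`) gives the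
matrix whose columns are the coefficient vectors of the derivatives `∂^β ω`, all supported in `A`
and vanishing for `β ∉ B`; its rank is the dimension of their span, which is `μ(ω)`. -/

open Finsupp

namespace MvPolynomial

section PDerivCoeff

variable {R σ : Type*} [CommSemiring R]

theorem coeff_pderiv_pow (i : σ) (k : ℕ) (p : MvPolynomial σ R) (m : σ →₀ ℕ) :
    coeff m ((((pderiv i).toLinearMap : Module.End R (MvPolynomial σ R)) ^ k) p) =
      coeff (m + single i k) p * (m i + k).descFactorial k := by
  induction k generalizing m with
  | zero => simp
  | succ k ih =>
    rw [pow_succ', Module.End.mul_apply, Derivation.coeFn_coe, coeff_pderiv, ih,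
      add_assoc, ← single_add, Finsupp.add_apply, single_eq_same, add_comm 1 k, mul_assoc]
    congr 1
    norm_cast
    rw [← add_assoc, Nat.descFactorial_succ, Nat.add_right_comm (m i) 1 k,
      show m i + k + 1 - k = m i + 1 by omega, mul_comm]

theorem coeff_prod_ofFn_pderiv_pow {n : ℕ} (f : Fin n → σ) (hf : Function.Injective f)
    (k : Fin n → ℕ) (p : MvPolynomial σ R) (m : σ →₀ ℕ) :
    coeff m ((List.ofFn fun j => ((pderiv (f j)).toLinearMap : Module.End R (MvPolynomial σ R)) ^
        k j).prod p) =
      coeff (m + ∑ j, single (f j) (k j)) p * ∏ j, (m (f j) + k j).descFactorial (k j) := by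
  induction n generalizing m with
  | zero => simp
  | succ n ih =>
    have hm : ∀ j : Fin n, (m + single (f 0) (k 0)) (f j.succ) = m (f j.succ) := fun j => by
      simp [hf.ne (Fin.succ_ne_zero j).symm]
    rw [List.ofFn_succ, List.prod_cons, Module.End.mul_apply, coeff_pderiv_pow,
      ih (fun j => f j.succ) (hf.comp (Fin.succ_injective _)) (fun j => k j.succ)]
    simp only [hm, Fin.sum_univ_succ, Fin.prod_univ_succ, add_assoc, Nat.cast_mul]
    ring

end PDerivCoeff

section CoeffMatrix

variable {K σ ι : Type*} [Field K]

theorem eq_zero_of_mem_restrictSupport_of_coeff_eq_zero {A : Finset (σ →₀ ℕ)}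
    {q : MvPolynomial σ K} (hq : q ∈ restrictSupport K (A : Set (σ →₀ ℕ)))
    (hA : ∀ a ∈ A, coeff a q = 0) : q = 0 := by
  ext α
  by_contra hα
  exact hα (hA α (hq (MvPolynomial.mem_support_iff.mpr hα)))

theorem rank_matrix_coeff_eq_finrank_span [Fintype ι] (A : Finset (σ →₀ ℕ))
    (p : ι → MvPolynomial σ K) (hp : ∀ i, p i ∈ restrictSupport K (A : Set (σ →₀ ℕ))) :
    (Matrix.of fun (a : A) i => coeff (a : σ →₀ ℕ) (p i)).rank =
      Module.finrank K (Submodule.span K (Set.range p)) := by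
  set W := Submodule.span K (Set.range p)
  let Φ : MvPolynomial σ K →ₗ[K] A → K := LinearMap.pi fun a => lcoeff K (a : σ →₀ ℕ)
  have hW : W ≤ restrictSupport K (A : Set (σ →₀ ℕ)) := Submodule.span_le.mpr <| by
    rintro _ ⟨i, rfl⟩
    exact hp i
  have hinj : Function.Injective (Φ ∘ₗ W.subtype) := by
    rw [← LinearMap.ker_eq_bot, Submodule.eq_bot_iff]
    rintro ⟨q, hqW⟩ hq
    exact Subtype.ext <| eq_zero_of_mem_restrictSupport_of_coeff_eq_zero (hW hqW)
      fun a ha => congr_fun hq ⟨a, ha⟩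
  rw [Matrix.rank_eq_finrank_span_cols, ← LinearMap.finrank_range_of_inj hinj,
    LinearMap.range_comp, Submodule.range_subtype, Submodule.map_span, ← Set.range_comp]
  rfl

end CoeffMatrix

end MvPolynomial

theorem Submodule.span_range_subtype_eq_of_eq_zero {R M ι : Type*} [Semiring R] [AddCommMonoid M]
    [Module R M] {f : ι → M} {s : ι → Prop} (hf : ∀ i, ¬s i → f i = 0) :
    span R (Set.range fun i : Subtype s => f i) = span R (Set.range f) := by
  refine le_antisymm (span_mono (Set.range_comp_subset_range Subtype.val f)) (span_le.mpr ?_)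
  rintro _ ⟨i, rfl⟩
  by_cases hi : s i
  · exact subset_span ⟨⟨i, hi⟩, rfl⟩
  · simp [hf i hi]

theorem LinearMap.list_prod_map_comp {R M N ι : Type*} [CommSemiring R] [AddCommMonoid M]
    [Module R M] [AddCommMonoid N] [Module R N] (f : M →ₗ[R] N) {S : ι → Module.End R M}
    {T : ι → Module.End R N} (h : ∀ j, T j ∘ₗ f = f ∘ₗ S j) (L : List ι) :
    (L.map T).prod ∘ₗ f = f ∘ₗ (L.map S).prod := by
  induction L with
  | nil => rfl
  | cons j L ih =>
    rw [List.map_cons, List.map_cons, List.prod_cons, List.prod_cons, Module.End.mul_eq_comp,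
      Module.End.mul_eq_comp, comp_assoc, ih, ← comp_assoc, h, comp_assoc]

section ShiftExpand

variable {K : Type*} [Field K] {n : ℕ}

theorem pderiv_inr_shiftExpand (i : Fin n) (p : MvPolynomial (Fin n) K) :
    pderiv (Sum.inr i) (shiftExpand p) = shiftExpand (pderiv i p) := by
  induction p using MvPolynomial.induction_on with
  | C c => simp [shiftExpand]
  | add p q hp hq => simp only [shiftExpand, map_add] at *; rw [hp, hq]
  | mul_X p j hp =>
    simp only [shiftExpand, map_mul, aeval_X, pderiv_mul, map_add, pderiv_X] at *
    rw [hp]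
    by_cases hij : i = j <;> simp [hij]

theorem shiftExpand_pderivPow (β : Fin n →₀ ℕ) (p : MvPolynomial (Fin n) K) :
    shiftExpand (PolyExp.pderivPow β p) =
      (List.ofFn fun i => ((pderiv (Sum.inr i)).toLinearMap :
        Module.End K (MvPolynomial (Fin n ⊕ Fin n) K)) ^ β i).prod (shiftExpand p) := by
  have key := LinearMap.list_prod_map_comp
    (aeval fun i => (X (Sum.inl i) + X (Sum.inr i) : MvPolynomial (Fin n ⊕ Fin n) K)).toLinearMap
    (S := fun i => (pderiv i).toLinearMap ^ β i)
    (T := fun i => (pderiv (Sum.inr i)).toLinearMap ^ β i)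
    (fun i => Module.End.commute_pow_left_of_commute
      (LinearMap.ext fun p => pderiv_inr_shiftExpand i p) (β i)) (List.finRange n)
  rw [PolyExp.pderivPow, List.ofFn_eq_map, List.ofFn_eq_map]
  exact (LinearMap.congr_fun key p).symm

theorem coeff_sumElim_zero_shiftExpand (α : Fin n →₀ ℕ) (p : MvPolynomial (Fin n) K) :
    coeff (sumElim α 0) (shiftExpand p) = coeff α p := by
  induction p using MvPolynomial.induction_on generalizing α with
  | C c =>
    have : sumElim α (0 : Fin n →₀ ℕ) = 0 ↔ α = 0 :=
      ⟨fun h => by ext i; exact DFunLike.congr_fun h (Sum.inl i), fun h => by simp [h]⟩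
    simp [shiftExpand, coeff_C, eq_comm, this]
  | add p q hp hq => simp only [shiftExpand, map_add, coeff_add] at *; rw [hp, hq]
  | mul_X p j hp =>
    have hsub :
        sumElim α (0 : Fin n →₀ ℕ) - single (Sum.inl j) 1 = sumElim (α - single j 1) 0 := by
      ext (x | x) <;> simp [single_apply]
    simp only [shiftExpand, map_mul, aeval_X, mul_add, coeff_add, coeff_mul_X'] at *
    simp [hsub, ← hp]

theorem coeff_pderivPow (α β : Fin n →₀ ℕ) (ω : MvPolynomial (Fin n) K) :
    coeff α (PolyExp.pderivPow β ω) =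
      coeff (sumElim α β) (shiftExpand ω) * ((∏ i, (β i).factorial : ℕ) : K) := by
  have hshift : sumElim α (0 : Fin n →₀ ℕ) + ∑ i, single (Sum.inr i) (β i) = sumElim α β := by
    ext (x | x) <;> simp [single_apply]
  rw [← coeff_sumElim_zero_shiftExpand, shiftExpand_pderivPow,
    coeff_prod_ofFn_pderiv_pow _ Sum.inr_injective, hshift]
  simp [Nat.descFactorial_self]

theorem mem_of_coeff_pderivPow_ne_zero {ω : MvPolynomial (Fin n) K} {A B : Finset (Fin n →₀ ℕ)}
    (hAB : ∀ γ ∈ (shiftExpand ω).support,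
      (sumFinsuppEquivProdFinsupp γ).1 ∈ A ∧ (sumFinsuppEquivProdFinsupp γ).2 ∈ B)
    {α β : Fin n →₀ ℕ} (h : coeff α (PolyExp.pderivPow β ω) ≠ 0) : α ∈ A ∧ β ∈ B := by
  rw [coeff_pderivPow] at h
  simpa using hAB _ (MvPolynomial.mem_support_iff.mpr (left_ne_zero_of_mul h))

end ShiftExpand

/-- If `ω(y+t) = Σ_{α∈A,β∈B} θ_{α,β} y^α t^β` with `A, B` finite sets
containing the supports, then `μ(ω)` equals the rank of the matrix `Θ = (θ_{α,β})`. -/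
theorem statement1 {K : Type*} [Field K] [CharZero K] {n : ℕ}
    (ω : MvPolynomial (Fin n) K) (A B : Finset (Fin n →₀ ℕ))
    (hAB : ∀ γ ∈ (shiftExpand ω).support,
      (Finsupp.sumFinsuppEquivProdFinsupp γ).1 ∈ A ∧ (Finsupp.sumFinsuppEquivProdFinsupp γ).2 ∈ B) :
    (Matrix.of fun (a : A) (b : B) =>
        MvPolynomial.coeff (Finsupp.sumFinsuppEquivProdFinsupp.symm ((a : Fin n →₀ ℕ), (b : Fin n →₀ ℕ)))
          (shiftExpand ω)).rank = PolyExp.mu ω := by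
  have hmem : ∀ {α β}, coeff α (PolyExp.pderivPow β ω) ≠ 0 → α ∈ A ∧ β ∈ B :=
    mem_of_coeff_pderivPow_ne_zero hAB
  let d : B → K := fun b => ((∏ i, (b.1 i).factorial : ℕ) : K)
  have hd : IsUnit (Matrix.diagonal d).det := by
    rw [Matrix.det_diagonal]
    exact IsUnit.mk0 _ <| Finset.prod_ne_zero_iff.mpr fun b _ =>
      Nat.cast_ne_zero.mpr <| Finset.prod_ne_zero_iff.mpr fun i _ => Nat.factorial_ne_zero _
  have hscale : (Matrix.of fun (a : A) (b : B) =>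
      coeff (sumFinsuppEquivProdFinsupp.symm ((a : Fin n →₀ ℕ), (b : Fin n →₀ ℕ)))
        (shiftExpand ω)) * Matrix.diagonal d =
      Matrix.of fun (a : A) (b : B) => coeff (a : Fin n →₀ ℕ) (PolyExp.pderivPow b ω) := by
    ext a b
    simp [d, coeff_pderivPow]
  have hvanish : ∀ β ∉ B, PolyExp.pderivPow β ω = 0 := fun β hβ => by
    ext α
    by_contra h
    exact hβ (hmem h).2
  rw [← Matrix.rank_mul_eq_left_of_isUnit_det _ _ hd, hscale,
    rank_matrix_coeff_eq_finrank_span A _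
      fun b α hα => (hmem (MvPolynomial.mem_support_iff.mp hα)).1,
    Submodule.span_range_subtype_eq_of_eq_zero hvanish, PolyExp.mu]
end

section
/- Let 𝕂 be a field of characteristic 0, let ξ₁,…,ξ_r ∈ 𝕂ⁿ be pairwise distinct, and for each i = 1,…,r let α_{i,1},…,α_{i,μᵢ} ∈ ℕⁿ be pairwise distinct multi-indices. Then the linear forms p ↦ (∂^{α_{i,j}} p)(ξᵢ) on 𝕂[x₁,…,xₙ] (for i = 1,…,r and j = 1,…,μᵢ), which correspond to the series y^{α_{i,j}} e^{⟨ξᵢ,y⟩}, are linearly independent in the dual space of 𝕂[x₁,…,xₙ]. -/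
open MvPolynomial

/-!
Test each functional against a polynomial adapted to it. For a point `ξᵢ` and a multi-index `β`
take `P = (x - ξᵢ)^β · G`, where `G(ξᵢ) ≠ 0` and, for every other point `ξₖ`, `G` is divisible by
a high power `(X_t - ξₖₜ)^N` of a coordinate form vanishing at `ξₖ`. A derivation lowers the
exponent of a power of `ℓ` dividing a polynomial by at most one, and not at all if it kills `ℓ`;
hence `(∂^γ P)(ξₖ) = 0` unless `k = i` and `β ≤ γ` (for `γ` with entries below `N`), while
`(∂^β P)(ξᵢ) = β! · G(ξᵢ) ≠ 0` in characteristic zero. So the pairing of functionals and test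
polynomials is triangular for the order on multi-indices, with nonzero diagonal.
-/

open Finset in
theorem linearIndependent_of_triangular {ι κ R M : Type*} [Finite ι] [Preorder κ]
    [CommRing R] [NoZeroDivisors R] [AddCommGroup M] [Module R M]
    (f : ι → Module.Dual R M) (v : ι → M) (key : ι → κ) (hdiag : ∀ i, f i (v i) ≠ 0)
    (hlt : ∀ i j, i ≠ j → f j (v i) ≠ 0 → key i < key j) :
    LinearIndependent R f := by
  classical
  have := Fintype.ofFinite ι
  rw [Fintype.linearIndependent_iff]
  intro g hg
  by_contra! hne
  obtain ⟨i, hi, hmax⟩ :=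
    exists_maximalFor key {j | g j ≠ 0} (by simpa [Finset.Nonempty] using hne)
  have hsum : ∑ j, g j * f j (v i) = g i * f i (v i) := by
    refine sum_eq_single i (fun j _ hji => ?_) (by simp)
    by_contra h
    have hgj : g j ≠ 0 := left_ne_zero_of_mul h
    have hlt := hlt i j (Ne.symm hji) (right_ne_zero_of_mul h)
    exact hlt.not_ge (hmax (by simpa using hgj) hlt.le)
  have hzero : ∑ j, g j * f j (v i) = 0 := by
    simpa using LinearMap.congr_fun hg (v i)
  exact mul_ne_zero (by simpa using hi) (hdiag i) (hsum ▸ hzero)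

section

variable {S A : Type*} [CommSemiring S] [CommSemiring A] [Module S A]

def LowersOrderBy (ℓ : A) (k : ℕ) (F : Module.End S A) : Prop :=
  ∀ N a, ℓ ^ (N + k) ∣ a → ℓ ^ N ∣ F a

namespace LowersOrderBy

variable {ℓ : A} {k m : ℕ} {F G : Module.End S A}

theorem one : LowersOrderBy ℓ 0 (1 : Module.End S A) := fun _ _ h => h

theorem mul (hF : LowersOrderBy ℓ k F) (hG : LowersOrderBy ℓ m G) :
    LowersOrderBy ℓ (k + m) (F * G) := fun N a h =>
  hF N _ (hG (N + k) a (by rwa [add_assoc]))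

theorem pow (hF : LowersOrderBy ℓ k F) (g : ℕ) : LowersOrderBy ℓ (g * k) (F ^ g) := by
  induction g with
  | zero => simpa using one
  | succ g ih => simpa [pow_succ, add_mul] using ih.mul hF

theorem prod_ofFn {m : ℕ} {F : Fin m → Module.End S A} {k : Fin m → ℕ}
    (hF : ∀ i, LowersOrderBy ℓ (k i) (F i)) :
    LowersOrderBy ℓ (∑ i, k i) (List.ofFn F).prod := by
  induction m with
  | zero => simpa using one
  | succ m ih =>
    rw [List.ofFn_succ, List.prod_cons, Fin.sum_univ_succ]
    exact (hF 0).mul (ih fun i => hF i.succ)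

end LowersOrderBy

end

namespace Derivation

variable {S A : Type*} [CommSemiring S] [CommSemiring A] [Algebra S A]
  (D : Derivation S A A) {ℓ : A}

theorem lowersOrderBy_one : LowersOrderBy ℓ 1 (D : Module.End S A) := by
  rintro N _ ⟨b, rfl⟩
  rw [Derivation.coeFn_coe, D.leibniz, D.leibniz_pow, Nat.add_sub_cancel, smul_eq_mul,
    smul_eq_mul, smul_eq_mul, pow_succ, nsmul_eq_mul]
  exact dvd_add (dvd_mul_of_dvd_left (dvd_mul_right _ _) _)
    (((dvd_mul_right _ _).mul_left _).mul_left _)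

theorem lowersOrderBy_zero (hD : D ℓ = 0) : LowersOrderBy ℓ 0 (D : Module.End S A) := by
  rintro N _ ⟨b, rfl⟩
  rw [add_zero, Derivation.coeFn_coe, D.leibniz, D.leibniz_pow, hD, smul_zero, smul_zero,
    smul_zero, add_zero, smul_eq_mul]
  exact dvd_mul_right _ _

theorem commute_mulLeft {f : A} (hD : D f = 0) :
    Commute (D : Module.End S A) (LinearMap.mulLeft S f) := by
  ext x
  simp [D.leibniz, hD]

open Nat in
theorem map_pow_apply_pow_mul {B : Type*} [Semiring B] (f : A →+* B) (hf : f ℓ = 0)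
    (hD : D ℓ = 1) (m : ℕ) (w : A) :
    f (((D : Module.End S A) ^ m) (ℓ ^ m * w)) = m ! • f w := by
  induction m with
  | zero => simp
  | succ m ih =>
    have hstep : (D : Module.End S A) (ℓ ^ (m + 1) * w) =
        (m + 1) • (ℓ ^ m * w) + ℓ ^ (1 + m) * D w := by
      rw [Derivation.coeFn_coe, D.leibniz, D.leibniz_pow, hD, Nat.add_sub_cancel, add_comm 1 m]
      simp only [smul_eq_mul, mul_one, nsmul_eq_mul]
      ring
    -- `D ^ m` lowers the `ℓ`-adic order by at most `m`, so the second term vanishes under `f`.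
    obtain ⟨r, hr⟩ : ℓ ^ 1 ∣ ((D : Module.End S A) ^ m) (ℓ ^ (1 + m) * D w) :=
      (D.lowersOrderBy_one.pow m) 1 _ (by rw [mul_one]; exact dvd_mul_right _ _)
    rw [pow_succ, Module.End.mul_apply, hstep, map_add, map_nsmul, map_add, map_nsmul, ih, hr,
      map_mul, pow_one, hf, zero_mul, add_zero, factorial_succ, mul_smul]

end Derivation

namespace PolyExp

open Nat

variable {K : Type*} [Field K] {n : ℕ}

theorem pderiv_X_sub_C_pow_of_ne {i t : Fin n} (h : i ≠ t) (c : K) (k : ℕ) :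
    pderiv i ((X t - C c) ^ k : MvPolynomial (Fin n) K) = 0 := by
  simp [pderiv_X_of_ne h.symm]

theorem lowersOrderBy_pderivPow (t : Fin n) (c : K) (γ : Fin n →₀ ℕ) :
    LowersOrderBy (X t - C c) (γ t) (pderivPow γ) := by
  have h := LowersOrderBy.prod_ofFn (ℓ := (X t - C c : MvPolynomial (Fin n) K))
    (k := Pi.single t (γ t))
    (F := fun i => ((pderiv i).toLinearMap : Module.End K (MvPolynomial (Fin n) K)) ^ (γ i))
    fun i => by
      by_cases hi : i = t
      · subst hi; simpa using (pderiv i).lowersOrderBy_one.pow (γ i)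
      · have hℓ : pderiv i (X t - C c) = 0 := by simpa using pderiv_X_sub_C_pow_of_ne hi c 1
        simpa [hi] using ((pderiv i).lowersOrderBy_zero hℓ).pow (γ i)
  rwa [Finset.sum_pi_single', if_pos (Finset.mem_univ t)] at h

theorem aeval_pderivPow_eq_zero_of_pow_dvd {ξ : Fin n → K} {t : Fin n} {N : ℕ}
    {γ : Fin n →₀ ℕ} {p : MvPolynomial (Fin n) K} (hp : (X t - C (ξ t)) ^ N ∣ p)
    (hγ : γ t < N) :
    aeval ξ (pderivPow γ p) = 0 := by
  obtain ⟨q, hq⟩ := lowersOrderBy_pderivPow t (ξ t) γ 1 p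
    ((pow_dvd_pow _ (by omega)).trans hp)
  simp [hq]

theorem aeval_pderiv_pow_X_sub_C_pow_mul (ξ : Fin n → K) (t : Fin n) (m : ℕ)
    (w : MvPolynomial (Fin n) K) :
    aeval ξ ((((pderiv t).toLinearMap : Module.End K (MvPolynomial (Fin n) K)) ^ m)
      ((X t - C (ξ t)) ^ m * w)) = m ! * aeval ξ w := by
  rw [← nsmul_eq_mul]
  exact (pderiv t).map_pow_apply_pow_mul (aeval ξ).toRingHom (by simp) (by simp) m w

theorem aeval_list_prod_pderiv_pow (ξ : Fin n → K) (β : Fin n → ℕ) {l : List (Fin n)}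
    (hl : l.Nodup) (w : MvPolynomial (Fin n) K) :
    aeval ξ
      ((l.map fun t => ((pderiv t).toLinearMap : Module.End K (MvPolynomial (Fin n) K)) ^ β t).prod
        ((l.map fun t => (X t - C (ξ t)) ^ β t).prod * w)) =
      (l.map fun t => ((β t)! : K)).prod * aeval ξ w := by
  induction l with
  | nil => simp
  | cons a l ih =>
    obtain ⟨ha, hl⟩ := List.nodup_cons.mp hl
    have hcomm : Commute (l.map fun t =>
          ((pderiv t).toLinearMap : Module.End K (MvPolynomial (Fin n) K)) ^ β t).prod
        (LinearMap.mulLeft K ((X a - C (ξ a)) ^ β a)) :=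
      Commute.list_prod_left _ _ fun _ hF => by
        obtain ⟨t, ht, rfl⟩ := List.mem_map.mp hF
        exact ((pderiv t).commute_mulLeft
          (pderiv_X_sub_C_pow_of_ne (ne_of_mem_of_not_mem ht ha) _ _)).pow_left _
    have hpass := LinearMap.congr_fun hcomm.eq ((l.map fun t => (X t - C (ξ t)) ^ β t).prod * w)
    simp only [Module.End.mul_apply, LinearMap.mulLeft_apply] at hpass
    simp only [List.map_cons, List.prod_cons, Module.End.mul_apply, mul_assoc, hpass,
      aeval_pderiv_pow_X_sub_C_pow_mul, ih hl]

theorem aeval_pderivPow_prod_X_sub_C_pow_mul (ξ : Fin n → K) (β : Fin n →₀ ℕ)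
    (w : MvPolynomial (Fin n) K) :
    aeval ξ (pderivPow β ((∏ t, (X t - C (ξ t)) ^ β t) * w)) =
      (∏ t, ((β t)! : K)) * aeval ξ w := by
  rw [pderivPow, List.ofFn_eq_map, Fin.prod_univ_def, Fin.prod_univ_def]
  exact aeval_list_prod_pderiv_pow ξ β (List.nodup_finRange n) w

theorem exists_aeval_ne_zero_and_pow_dvd {ι : Type*} [Finite ι] (ξ : ι → Fin n → K)
    (hξ : Function.Injective ξ) (i : ι) (N : ℕ) :
    ∃ G : MvPolynomial (Fin n) K,
      aeval (ξ i) G ≠ 0 ∧ ∀ k ≠ i, ∃ t, (X t - C (ξ k t)) ^ N ∣ G := by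
  classical
  have := Fintype.ofFinite ι
  choose t ht using fun k (hk : k ≠ i) => Function.ne_iff.mp (hξ.ne hk)
  let ℓ : {k // k ≠ i} → MvPolynomial (Fin n) K := fun k => X (t k k.2) - C (ξ k (t k k.2))
  refine ⟨∏ k, ℓ k ^ N, ?_, fun k hk => ⟨t k hk, ?_⟩⟩
  · rw [map_prod]
    refine Finset.prod_ne_zero_iff.mpr fun k _ => ?_
    rw [map_pow]
    refine pow_ne_zero _ ?_
    simpa [ℓ, sub_eq_zero] using (ht k k.2).symm
  · show ℓ ⟨k, hk⟩ ^ N ∣ _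
    exact Finset.dvd_prod_of_mem _ (Finset.mem_univ _)

theorem exists_poly_aeval_pderivPow_triangular [CharZero K] {ι : Type*} [Finite ι]
    (ξ : ι → Fin n → K) (hξ : Function.Injective ξ) (i : ι) (β : Fin n →₀ ℕ) (N : ℕ) :
    ∃ P : MvPolynomial (Fin n) K, aeval (ξ i) (pderivPow β P) ≠ 0 ∧
        ∀ k γ, (∀ t, γ t < N) → aeval (ξ k) (pderivPow γ P) ≠ 0 → k = i ∧ β ≤ γ := by
  obtain ⟨G, hGi, hGk⟩ := exists_aeval_ne_zero_and_pow_dvd ξ hξ i N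
  refine ⟨(∏ t, (X t - C (ξ i t)) ^ β t) * G, ?_, fun k γ hγ hne => ?_⟩
  · rw [aeval_pderivPow_prod_X_sub_C_pow_mul]
    exact mul_ne_zero
      (Finset.prod_ne_zero_iff.mpr fun t _ => Nat.cast_ne_zero.mpr (factorial_ne_zero _)) hGi
  obtain rfl : k = i := by
    by_contra hk
    obtain ⟨t, ht⟩ := hGk k hk
    exact hne (aeval_pderivPow_eq_zero_of_pow_dvd (ht.mul_left _) (hγ t))
  refine ⟨rfl, fun t => ?_⟩
  by_contra! hlt
  have hdvd : (X t - C (ξ k t)) ^ β t ∣ (∏ t, (X t - C (ξ k t)) ^ β t) * G :=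
    (Finset.dvd_prod_of_mem (fun t => (X t - C (ξ k t)) ^ β t) (Finset.mem_univ t)).mul_right _
  exact hne (aeval_pderivPow_eq_zero_of_pow_dvd hdvd hlt)

end PolyExp

/-- For pairwise distinct points `ξ₁,…,ξ_r ∈ 𝕂ⁿ` and, for each `i`,
pairwise distinct multi-indices `α_{i,1},…,α_{i,μᵢ}`, the linear forms
`p ↦ (∂^{α_{i,j}} p)(ξᵢ)` are linearly independent in the dual of `𝕂[x₁,…,xₙ]`. -/
theorem statement2 {K : Type*} [Field K] [CharZero K] {n : ℕ}
    (r : ℕ) (ξ : Fin r → Fin n → K) (hξ : Function.Injective ξ)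
    (μ : Fin r → ℕ) (α : (i : Fin r) → Fin (μ i) → (Fin n →₀ ℕ))
    (hα : ∀ i, Function.Injective (α i)) :
    LinearIndependent K
      (fun q : (i : Fin r) × Fin (μ i) =>
        PolyExp.evalDual (ξ q.1) ∘ₗ PolyExp.pderivPow (α q.1 q.2)) := by
  obtain ⟨M, hM⟩ :=
    Finite.exists_le fun p : ((i : Fin r) × Fin (μ i)) × Fin n => α p.1.1 p.1.2 p.2
  choose P hdiag hoff using fun q : (i : Fin r) × Fin (μ i) =>
    PolyExp.exists_poly_aeval_pderivPow_triangular ξ hξ q.1 (α q.1 q.2) (M + 1)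
  refine linearIndependent_of_triangular _ P (fun q => α q.1 q.2) hdiag ?_
  rintro ⟨i, j⟩ ⟨k, l⟩ hne hkl
  obtain ⟨rfl, hle⟩ := hoff _ _ _ (fun t => Nat.lt_succ_of_le (hM (⟨k, l⟩, t))) hkl
  exact lt_of_le_of_ne hle fun h => hne (congrArg (Sigma.mk k) (hα k h))
end

section
/- Let 𝕂 be an algebraically closed field of characteristic 0, σ : 𝕂[x₁,…,xₙ] → 𝕂 a linear form, and ξ₁,…,ξ_r ∈ 𝕂ⁿ pairwise distinct. The following are equivalent: (1) there exist ω₁,…,ω_r ∈ 𝕂 ∖ {0} such that σ = Σ_{i=1}^{r} ωᵢ e_{ξᵢ}; (2) the evaluations e_{ξ₁},…,e_{ξ_r} form a basis of the image of the Hankel operator H_σ, i.e. of the linear span of {p ⋆ σ : p ∈ 𝕂[x]}. -/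
open MvPolynomial

namespace PolyExpAux

variable {K : Type*} [Field K] {n : ℕ}

lemma sep (a b : Fin n → K) (h : a ≠ b) :
    ∃ p : MvPolynomial (Fin n) K, aeval a p = 1 ∧ aeval b p = 0 := by
  obtain ⟨k, hk⟩ := Function.ne_iff.mp h
  refine ⟨C ((a k - b k)⁻¹) * (X k - C (b k)), ?_, ?_⟩
  · simp [inv_mul_cancel₀ (sub_ne_zero.mpr hk)]
  · simp

lemma interp {r : ℕ} (ξ : Fin r → Fin n → K) (hξ : Function.Injective ξ) :
    ∃ p : Fin r → MvPolynomial (Fin n) K,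
      ∀ i j, aeval (ξ j) (p i) = if j = i then 1 else 0 := by
  have H : ∀ i j : Fin r, i ≠ j → ∃ p : MvPolynomial (Fin n) K,
      aeval (ξ i) p = 1 ∧ aeval (ξ j) p = 0 :=
    fun i j h => sep _ _ (fun he => h (hξ he))
  choose! q hq1 hq0 using H
  refine ⟨fun i => ∏ j ∈ Finset.univ.erase i, q i j, fun i j => ?_⟩
  by_cases hji : j = i
  · subst hji
    rw [if_pos rfl, map_prod]
    exact Finset.prod_eq_one fun k hk =>
      hq1 j k (Ne.symm (Finset.ne_of_mem_erase hk))
  · rw [if_neg hji, map_prod]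
    exact Finset.prod_eq_zero (Finset.mem_erase.mpr ⟨hji, Finset.mem_univ j⟩)
      (hq0 i j (fun h => hji h.symm))

end PolyExpAux

/-- For pairwise distinct `ξ₁,…,ξ_r`, the following are equivalent:
(1) `σ = Σᵢ ωᵢ e_{ξᵢ}` with nonzero scalars `ωᵢ`;
(2) the evaluations `e_{ξ₁},…,e_{ξ_r}` form a basis of the image of `H_σ`. -/
theorem statement8 {K : Type*} [Field K] [CharZero K] [IsAlgClosed K] {n : ℕ}
    (r : ℕ) (σ : Module.Dual K (MvPolynomial (Fin n) K))
    (ξ : Fin r → Fin n → K) (hξ : Function.Injective ξ) :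
    (∃ ω : Fin r → K, (∀ i, ω i ≠ 0) ∧ σ = ∑ i, ω i • PolyExp.evalDual (ξ i)) ↔
    (LinearIndependent K (fun i => PolyExp.evalDual (ξ i)) ∧
      Submodule.span K (Set.range fun i => PolyExp.evalDual (ξ i)) =
        LinearMap.range (PolyExp.hankel σ)) := by
  obtain ⟨p, hp⟩ := PolyExpAux.interp ξ hξ
  have heval : ∀ (i : Fin r) (f : MvPolynomial (Fin n) K),
      PolyExp.evalDual (ξ i) f = MvPolynomial.aeval (ξ i) f := fun _ _ => rfl
  have hhank : ∀ (f g : MvPolynomial (Fin n) K),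
      PolyExp.hankel σ f g = σ (f * g) := fun _ _ => rfl
  have hli : LinearIndependent K (fun i => PolyExp.evalDual (ξ i)) := by
    rw [Fintype.linearIndependent_iff]
    intro g hg i
    have h := congrArg (fun φ : Module.Dual K (MvPolynomial (Fin n) K) => φ (p i)) hg
    simpa [heval, hp, Finset.sum_ite_eq'] using h
  constructor
  · rintro ⟨ω, hω, rfl⟩
    refine ⟨hli, le_antisymm ?_ ?_⟩
    · rw [Submodule.span_le]
      rintro _ ⟨i, rfl⟩
      refine ⟨(ω i)⁻¹ • p i, ?_⟩
      apply LinearMap.ext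
      intro q
      have : ∀ j, (∑ k, ω k • PolyExp.evalDual (ξ k)) ((p j) * q)
          = ω j * MvPolynomial.aeval (ξ j) q := by
        intro j
        simp only [LinearMap.sum_apply, LinearMap.smul_apply, heval, map_mul, hp,
          smul_eq_mul]
        rw [Finset.sum_eq_single j]
        · simp
        · intro k _ hk
          simp [hp, hk]
        · simp
      rw [hhank, smul_mul_assoc, map_smul, smul_eq_mul, this i, heval,
        ← mul_assoc, inv_mul_cancel₀ (hω i), one_mul]
    · rintro _ ⟨f, rfl⟩
      have : PolyExp.hankel (∑ i, ω i • PolyExp.evalDual (ξ i)) f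
          = ∑ i, (ω i * MvPolynomial.aeval (ξ i) f) • PolyExp.evalDual (ξ i) := by
        apply LinearMap.ext
        intro q
        simp only [hhank, LinearMap.sum_apply, LinearMap.smul_apply, heval, map_mul,
          smul_eq_mul]
        ring_nf
      rw [this]
      exact Submodule.sum_mem _ fun i _ =>
        Submodule.smul_mem _ _ (Submodule.subset_span ⟨i, rfl⟩)
  · rintro ⟨hind, hspan⟩
    have hσ : σ ∈ Submodule.span K (Set.range fun i => PolyExp.evalDual (ξ i)) := by
      rw [hspan]
      exact ⟨1, by apply LinearMap.ext; intro q; simp [hhank]⟩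
    rw [Submodule.mem_span_range_iff_exists_fun K] at hσ
    obtain ⟨ω, hω⟩ := hσ
    refine ⟨ω, fun i => ?_, hω.symm⟩
    have hmem : PolyExp.evalDual (ξ i) ∈ LinearMap.range (PolyExp.hankel σ) := by
      rw [← hspan]; exact Submodule.subset_span ⟨i, rfl⟩
    obtain ⟨f, hf⟩ := hmem
    have h1 : PolyExp.hankel σ f (p i) = 1 := by
      rw [hf, heval, hp, if_pos rfl]
    rw [hhank, ← hω] at h1
    simp only [LinearMap.sum_apply, LinearMap.smul_apply, heval, map_mul, smul_eq_mul] at h1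
    rw [Finset.sum_eq_single i] at h1
    · intro h0
      rw [h0] at h1
      simp at h1
    · intro k _ hk
      simp [hp, hk]
    · simp
end

section
/- Let σ : ℝ[x₁,…,xₙ] → ℝ be a linear form whose Hankel operator H_σ has finite rank. Then σ(p²) ≥ 0 for all p ∈ ℝ[x₁,…,xₙ] if and only if there exist r ∈ ℕ, pairwise distinct real points ξ₁,…,ξ_r ∈ ℝⁿ and real weights ω₁,…,ω_r > 0 such that σ = Σ_{i=1}^{r} ωᵢ e_{ξᵢ}. -/
/-!
If `σ(p²) ≥ 0` for all `p`, Cauchy–Schwarz shows that the kernel `I_σ` of `H_σ` consists of the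
`p` with `σ(p²) = 0`, so `σ` descends to a positive definite form on `A = ℝ[x] / I_σ`, which is
finite-dimensional since `A ≅ im H_σ`. Positive definiteness makes `A` reduced, hence a product of
finite extensions of `ℝ`, and none of them can be `ℂ`: a square root of `-1` in one factor would
give a square on which the form is negative. So `A ≅ ℝʳ`; the points `ξᵢ` are the `r` characters
of `A` and the weights `ωᵢ` are the values of `σ` on the primitive idempotents.
-/

open MvPolynomial

theorem bijective_algebraMap_of_forall_mul_self_ne_neg_one {K : Type*} [Field K]
    [Algebra ℝ K] [FiniteDimensional ℝ K] (h : ∀ y : K, y * y ≠ -1) :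
    Function.Bijective (algebraMap ℝ K) := by
  rcases Real.nonempty_algEquiv_or K with ⟨⟨e⟩⟩ | ⟨⟨e⟩⟩
  · convert e.symm.bijective
    ext x
    exact (e.symm.commutes x).symm
  · refine absurd ?_ (h (e.symm Complex.I))
    rw [← map_mul, Complex.I_mul_I, map_neg, map_one]

def IsPosDefFunctional {A : Type*} [Ring A] [Algebra ℝ A] (τ : A →ₗ[ℝ] ℝ) : Prop :=
  ∀ a, a ≠ 0 → 0 < τ (a * a)

namespace IsPosDefFunctional

section Ring

variable {A : Type*} [Ring A] [Algebra ℝ A] {τ : A →ₗ[ℝ] ℝ}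

theorem nonneg (hτ : IsPosDefFunctional τ) (a : A) : 0 ≤ τ (a * a) := by
  rcases eq_or_ne a 0 with rfl | ha
  · simp
  · exact (hτ a ha).le

theorem isReduced (hτ : IsPosDefFunctional τ) : IsReduced A := by
  refine (isReduced_iff_pow_one_lt 2 one_lt_two).2 fun a ha => ?_
  by_contra h
  simpa [← sq, ha] using hτ a h

theorem comp_algEquiv {B : Type*} [Ring B] [Algebra ℝ B] (hτ : IsPosDefFunctional τ)
    (e : B ≃ₐ[ℝ] A) : IsPosDefFunctional (τ ∘ₗ e.toLinearMap) := fun b hb => by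
  simpa using hτ (e b) (by simpa using hb)

end Ring

theorem mul_self_ne_neg_one_of_pi {ι : Type*} [DecidableEq ι] {K : ι → Type*}
    [∀ i, Ring (K i)] [∀ i, Algebra ℝ (K i)] [∀ i, Nontrivial (K i)]
    {τ : (Π i, K i) →ₗ[ℝ] ℝ} (hτ : IsPosDefFunctional τ) (i : ι) (y : K i) : y * y ≠ -1 := by
  intro hy
  have hsq : Pi.single i y * Pi.single i y = -(Pi.single i 1 * Pi.single i 1 : Π i, K i) := by
    rw [← Pi.single_mul, ← Pi.single_mul, hy, mul_one, Pi.single_neg]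
  have hy0 : Pi.single i y ≠ 0 := by
    rintro h
    rw [h, zero_mul, zero_eq_neg, ← Pi.single_mul, mul_one, Pi.single_eq_zero_iff] at hsq
    exact one_ne_zero hsq
  have := hτ _ hy0
  rw [hsq, map_neg] at this
  linarith [hτ.nonneg (Pi.single i 1 : Π i, K i)]

variable {A : Type*} [CommRing A] [Algebra ℝ A] {τ : A →ₗ[ℝ] ℝ}

theorem exists_algEquiv_fin_pi [Module.Finite ℝ A] (hτ : IsPosDefFunctional τ) :
    ∃ r : ℕ, Nonempty (A ≃ₐ[ℝ] (Fin r → ℝ)) := by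
  classical
  have := hτ.isReduced
  have : IsArtinianRing A := isArtinian_of_tower ℝ inferInstance
  let := IsArtinianRing.fieldOfSubtypeIsMaximal (R := A)
  let e₁ : A ≃ₐ[ℝ] Π m : MaximalSpectrum A, A ⧸ m.asIdeal :=
    (IsArtinianRing.equivPi A).restrictScalars ℝ
  have hres (m : MaximalSpectrum A) : Function.Bijective (algebraMap ℝ (A ⧸ m.asIdeal)) :=
    bijective_algebraMap_of_forall_mul_self_ne_neg_one
      ((hτ.comp_algEquiv e₁.symm).mul_self_ne_neg_one_of_pi m)
  let e₂ (m : MaximalSpectrum A) : (A ⧸ m.asIdeal) ≃ₐ[ℝ] ℝ :=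
    (AlgEquiv.ofBijective (Algebra.ofId ℝ _) (hres m)).symm
  let := Fintype.ofFinite (MaximalSpectrum A)
  exact ⟨_, ⟨e₁.trans <| (AlgEquiv.piCongrRight e₂).trans <|
    AlgEquiv.piCongrLeft' ℝ (fun _ => ℝ) (Fintype.equivFin _)⟩⟩

theorem exists_eq_sum_algHom [Module.Finite ℝ A] (hτ : IsPosDefFunctional τ) :
    ∃ (r : ℕ) (χ : Fin r → A →ₐ[ℝ] ℝ) (ω : Fin r → ℝ),
      Function.Injective χ ∧ (∀ k, 0 < ω k) ∧ ∀ a, τ a = ∑ k, ω k * χ k a := by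
  obtain ⟨r, ⟨e⟩⟩ := hτ.exists_algEquiv_fin_pi
  let idem (k : Fin r) : A := e.symm (Pi.single k 1)
  have idem_mul_self (k : Fin r) : idem k * idem k = idem k := by
    simp only [idem, ← map_mul, ← Pi.single_mul, mul_one]
  refine ⟨r, fun k => (Pi.evalAlgHom ℝ (fun _ => ℝ) k).comp e, fun k => τ (idem k),
    fun k l hkl => ?_, fun k => ?_, fun a => ?_⟩
  · have hval := DFunLike.congr_fun hkl (idem k)
    simp only [idem, AlgHom.comp_apply, AlgEquiv.coe_toAlgHom, AlgEquiv.apply_symm_apply,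
      Pi.evalAlgHom_apply, Pi.single_eq_same] at hval
    by_contra h
    simp [Pi.single_eq_of_ne' h] at hval
  · show 0 < τ (idem k)
    rw [← idem_mul_self]
    exact hτ _ (by simp [idem])
  · conv_lhs => rw [← e.symm_apply_apply a, ← Finset.univ_sum_single (e a)]
    rw [map_sum, map_sum]
    refine Finset.sum_congr rfl fun k _ => ?_
    rw [← mul_one (e a k), ← smul_eq_mul, Pi.single_smul', map_smul, map_smul, smul_eq_mul,
      mul_comm]
    rfl

end IsPosDefFunctional

theorem LinearMap.map_mul_eq_zero_of_map_mul_self_eq_zero {A : Type*} [CommRing A] [Algebra ℝ A]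
    {τ : A →ₗ[ℝ] ℝ} (hτ : ∀ a, 0 ≤ τ (a * a)) {p : A} (hp : τ (p * p) = 0) (q : A) :
    τ (p * q) = 0 := by
  by_contra hc
  -- `τ((t p + q)²) = 2 t τ(p q) + τ(q²)` is affine in `t` with nonzero slope, so it can be `-1`
  obtain ⟨t, ht⟩ : ∃ t : ℝ, 2 * t * τ (p * q) = -(τ (q * q) + 1) :=
    ⟨-(τ (q * q) + 1) / (2 * τ (p * q)), by field_simp⟩
  have hexpand : (t • p + q) * (t • p + q) = (t * t) • (p * p) + (2 * t) • (p * q) + q * q := by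
    rw [add_mul, mul_add, mul_add, smul_mul_smul_comm, two_mul, add_smul,
      smul_mul_assoc, mul_smul_comm, mul_comm q p]
    abel
  have hneg : τ ((t • p + q) * (t • p + q)) = -1 := by
    rw [hexpand, map_add, map_add, map_smul, map_smul, hp, smul_eq_mul, smul_eq_mul]
    linear_combination ht
  linarith [hτ (t • p + q)]

namespace PolyExp

section Quotient

variable {K : Type*} [Field K] {n : ℕ} {σ : Module.Dual K (MvPolynomial (Fin n) K)}

theorem ker_hankel : LinearMap.ker (hankel σ) = (hankelKer σ).restrictScalars K := by
  ext p
  simp only [LinearMap.mem_ker, Submodule.restrictScalars_mem]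
  exact ⟨fun h q => LinearMap.congr_fun h q, fun h => LinearMap.ext h⟩

theorem map_eq_zero_of_mem_hankelKer {p : MvPolynomial (Fin n) K} (hp : p ∈ hankelKer σ) :
    σ p = 0 := by
  simpa using hp 1

theorem finite_quotient_hankelKer (hfin : Module.Finite K (LinearMap.range (hankel σ))) :
    Module.Finite K (MvPolynomial (Fin n) K ⧸ hankelKer σ) :=
  .equiv <| (Submodule.Quotient.restrictScalarsEquiv K (hankelKer σ)).symm ≪≫ₗ
    Submodule.quotEquivOfEq _ _ ker_hankel.symm ≪≫ₗ (hankel σ).quotKerEquivRange |>.symm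

variable (σ) in
noncomputable def quotientForm : (MvPolynomial (Fin n) K ⧸ hankelKer σ) →ₗ[K] K :=
  ((hankelKer σ).restrictScalars K).liftQ σ (fun _ hp => map_eq_zero_of_mem_hankelKer hp) ∘ₗ
    (Submodule.Quotient.restrictScalarsEquiv K (hankelKer σ)).symm.toLinearMap

@[simp]
theorem quotientForm_mk (p : MvPolynomial (Fin n) K) :
    quotientForm σ (Ideal.Quotient.mk (hankelKer σ) p) = σ p :=
  rfl

end Quotient

variable {n : ℕ} {σ : Module.Dual ℝ (MvPolynomial (Fin n) ℝ)}

@[simp]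
theorem evalDual_apply (ξ : Fin n → ℝ) (p : MvPolynomial (Fin n) ℝ) :
    evalDual ξ p = aeval ξ p :=
  rfl

theorem isPosDefFunctional_quotientForm (hσ : ∀ p, 0 ≤ σ (p * p)) :
    IsPosDefFunctional (quotientForm σ) := by
  intro a ha
  obtain ⟨p, rfl⟩ := Ideal.Quotient.mk_surjective a
  rw [← map_mul, quotientForm_mk]
  refine (hσ p).lt_of_ne' fun hp => ha ?_
  exact Ideal.Quotient.eq_zero_iff_mem.2 (LinearMap.map_mul_eq_zero_of_map_mul_self_eq_zero hσ hp)

theorem exists_eq_sum_smul_evalDual (hfin : Module.Finite ℝ (LinearMap.range (hankel σ)))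
    (hσ : ∀ p, 0 ≤ σ (p * p)) :
    ∃ (r : ℕ) (ξ : Fin r → Fin n → ℝ) (ω : Fin r → ℝ),
      Function.Injective ξ ∧ (∀ i, 0 < ω i) ∧ σ = ∑ i, ω i • evalDual (ξ i) := by
  have := finite_quotient_hankelKer hfin
  obtain ⟨r, χ, ω, hχ, hω, hσχ⟩ := (isPosDefFunctional_quotientForm hσ).exists_eq_sum_algHom
  let ξ (k : Fin r) (j : Fin n) : ℝ := χ k (Ideal.Quotient.mk _ (X j))
  have hχξ (k : Fin r) : (χ k).comp (Ideal.Quotient.mkₐ ℝ (hankelKer σ)) = aeval (ξ k) :=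
    algHom_ext fun _ => by simp [ξ]
  refine ⟨r, ξ, ω, fun k l hkl => hχ ?_, hω, LinearMap.ext fun p => ?_⟩
  · exact Ideal.Quotient.algHom_ext ℝ (by rw [hχξ, hχξ, hkl])
  · rw [← quotientForm_mk, hσχ]
    simp [← hχξ]

theorem sum_smul_evalDual_mul_self_nonneg {r : ℕ} (ξ : Fin r → Fin n → ℝ) {ω : Fin r → ℝ}
    (hω : ∀ i, 0 ≤ ω i) (p : MvPolynomial (Fin n) ℝ) :
    0 ≤ (∑ i, ω i • evalDual (ξ i)) (p * p) := by
  simp only [LinearMap.sum_apply, LinearMap.smul_apply, evalDual_apply, map_mul, smul_eq_mul]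
  exact Finset.sum_nonneg fun i _ => mul_nonneg (hω i) (mul_self_nonneg _)

end PolyExp

/-- A linear form `σ` on `ℝ[x]` whose Hankel operator has finite rank
satisfies `σ(p²) ≥ 0` for all `p` iff `σ = Σᵢ ωᵢ e_{ξᵢ}` for pairwise distinct real
points `ξᵢ` and positive weights `ωᵢ`. -/
theorem statement9 {n : ℕ} (σ : Module.Dual ℝ (MvPolynomial (Fin n) ℝ))
    (hfin : Module.Finite ℝ (LinearMap.range (PolyExp.hankel σ))) :
    (∀ p : MvPolynomial (Fin n) ℝ, 0 ≤ σ (p * p)) ↔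
    (∃ (r : ℕ) (ξ : Fin r → Fin n → ℝ) (ω : Fin r → ℝ),
      Function.Injective ξ ∧ (∀ i, 0 < ω i) ∧
      σ = ∑ i, ω i • PolyExp.evalDual (ξ i)) := by
  constructor
  · exact PolyExp.exists_eq_sum_smul_evalDual hfin
  · rintro ⟨r, ξ, ω, -, hω, rfl⟩
    exact PolyExp.sum_smul_evalDual_mul_self_nonneg ξ fun i => (hω i).le
end

section
/- Let 𝕂 be a field of characteristic 0 and σ = Σ_{i=1}^{r} ωᵢ e_{ξᵢ} with ωᵢ ∈ 𝕂 ∖ {0} and ξ₁,…,ξ_r ∈ 𝕂ⁿ pairwise distinct. Let g ∈ 𝕂[x] satisfy g(ξᵢ) ≠ g(ξⱼ) for i ≠ j. Then the multiplication operator M_g : A_σ → A_σ, a ↦ g·a, is diagonalizable with eigenvalues exactly g(ξ₁),…,g(ξ_r), and for each i the eigenspace of M_g for the eigenvalue g(ξᵢ) is one-dimensional, spanned by the class in A_σ of any polynomial uᵢ with uᵢ(ξⱼ) = δ_{ij} for all j. -/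
open MvPolynomial

private lemma exists_interp {K : Type*} [Field K] {n r : ℕ} (ξ : Fin r → Fin n → K)
    (hξ : Function.Injective ξ) (i : Fin r) :
    ∃ u : MvPolynomial (Fin n) K, ∀ j, MvPolynomial.aeval (ξ j) u = if i = j then 1 else 0 := by
  classical
  have hne : ∀ j : {x : Fin r // x ∈ Finset.univ.erase i}, ∃ k, ξ (j : Fin r) k ≠ ξ i k := by
    intro j
    exact Function.ne_iff.mp (fun h => (Finset.ne_of_mem_erase j.2) (hξ h))
  choose k hk using hne
  refine ⟨∏ j ∈ (Finset.univ.erase i).attach,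
      (MvPolynomial.C ((ξ i (k j) - ξ (j : Fin r) (k j))⁻¹) *
        (MvPolynomial.X (k j) - MvPolynomial.C (ξ (j : Fin r) (k j)))), ?_⟩
  intro l
  rw [map_prod]
  by_cases hl : i = l
  · subst hl
    rw [if_pos rfl]
    refine Finset.prod_eq_one fun j _ => ?_
    have h0 : ξ i (k j) - ξ (j : Fin r) (k j) ≠ 0 := sub_ne_zero.mpr (Ne.symm (hk j))
    rw [map_mul, map_sub, aeval_X, aeval_C, aeval_C]
    exact inv_mul_cancel₀ h0
  · rw [if_neg hl]
    have hlmem : l ∈ Finset.univ.erase i :=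
      Finset.mem_erase.mpr ⟨fun h => hl h.symm, Finset.mem_univ l⟩
    refine Finset.prod_eq_zero (Finset.mem_attach _ ⟨l, hlmem⟩) ?_
    simp

/-- If `σ = Σᵢ ωᵢ e_{ξᵢ}` with nonzero scalar weights and pairwise
distinct points, and `g` separates the points, then `M_g` on `A_σ` is diagonalizable,
its eigenvalues are exactly `g(ξ₁),…,g(ξ_r)`, and the eigenspace of `g(ξᵢ)` is the line
spanned by the class of any interpolation polynomial `uᵢ` with `uᵢ(ξⱼ) = δᵢⱼ`. -/
theorem statement12 {K : Type*} [Field K] [CharZero K] {n : ℕ}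
    (r : ℕ) (ξ : Fin r → Fin n → K) (hξ : Function.Injective ξ)
    (ω : Fin r → K) (hω : ∀ i, ω i ≠ 0)
    (σ : Module.Dual K (MvPolynomial (Fin n) K))
    (hσ : σ = ∑ i, ω i • PolyExp.evalDual (ξ i))
    (g : MvPolynomial (Fin n) K)
    (hg : ∀ i j, i ≠ j → MvPolynomial.aeval (ξ i) g ≠ MvPolynomial.aeval (ξ j) g) :
    (∀ μ : K,
      Module.End.HasEigenvalue
        (LinearMap.mulLeft K (Ideal.Quotient.mk (PolyExp.hankelKer σ) g)) μ ↔
      ∃ i, μ = MvPolynomial.aeval (ξ i) g) ∧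
    ((⨆ μ : K, Module.End.eigenspace
        (LinearMap.mulLeft K (Ideal.Quotient.mk (PolyExp.hankelKer σ) g)) μ) = ⊤) ∧
    (∀ i : Fin r, ∀ u : MvPolynomial (Fin n) K,
      (∀ j, MvPolynomial.aeval (ξ j) u = if i = j then 1 else 0) →
      Module.End.eigenspace
          (LinearMap.mulLeft K (Ideal.Quotient.mk (PolyExp.hankelKer σ) g))
          (MvPolynomial.aeval (ξ i) g) =
        Submodule.span K {Ideal.Quotient.mk (PolyExp.hankelKer σ) u}) := by
  classical
  set I := PolyExp.hankelKer σ with hIdef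
  set M := LinearMap.mulLeft K (Ideal.Quotient.mk I g) with hMdef
  obtain ⟨u0, hu0⟩ : ∃ u0 : Fin r → MvPolynomial (Fin n) K,
      ∀ i j, MvPolynomial.aeval (ξ j) (u0 i) = if i = j then 1 else 0 := by
    choose u0 h using fun i => exists_interp ξ hξ i
    exact ⟨u0, h⟩
  -- σ applied to a product
  have hσap : ∀ p q : MvPolynomial (Fin n) K,
      σ (p * q) = ∑ j, ω j * (MvPolynomial.aeval (ξ j) p * MvPolynomial.aeval (ξ j) q) := by
    intro p q
    rw [hσ]
    simp only [LinearMap.sum_apply, LinearMap.smul_apply, PolyExp.evalDual,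
      AlgHom.toLinearMap_apply, map_mul, smul_eq_mul]
  -- hankelKer is the vanishing ideal
  have memI : ∀ p : MvPolynomial (Fin n) K, p ∈ I ↔ ∀ i, MvPolynomial.aeval (ξ i) p = 0 := by
    intro p
    constructor
    · intro hp i
      have hp' : ∀ q, σ (p * q) = 0 := hp
      have h1 : σ (p * u0 i) = 0 := hp' (u0 i)
      rw [hσap] at h1
      have h2 : (∑ j, ω j * (MvPolynomial.aeval (ξ j) p * MvPolynomial.aeval (ξ j) (u0 i)))
          = ω i * MvPolynomial.aeval (ξ i) p := by
        rw [Finset.sum_eq_single i]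
        · rw [hu0 i i, if_pos rfl, mul_one]
        · intro j _ hj
          rw [hu0 i j, if_neg (fun h => hj h.symm), mul_zero, mul_zero]
        · intro h; exact absurd (Finset.mem_univ i) h
      rw [h2] at h1
      exact (mul_eq_zero.mp h1).resolve_left (hω i)
    · intro h
      show ∀ q, σ (p * q) = 0
      intro q
      rw [hσap]
      exact Finset.sum_eq_zero fun j _ => by rw [h j, zero_mul, mul_zero]
  -- core eigenspace characterization
  have key : ∀ (p : MvPolynomial (Fin n) K) (μ : K),
      (Ideal.Quotient.mk I p ∈ Module.End.eigenspace M μ ↔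
        ∀ j, (MvPolynomial.aeval (ξ j) g - μ) * MvPolynomial.aeval (ξ j) p = 0) := by
    intro p μ
    rw [Module.End.mem_eigenspace_iff, hMdef, LinearMap.mulLeft_apply]
    have hsm : μ • Ideal.Quotient.mk I p = Ideal.Quotient.mk I (MvPolynomial.C μ * p) := by
      rw [← MvPolynomial.smul_eq_C_mul]; rfl
    rw [hsm, ← map_mul, Ideal.Quotient.eq, memI]
    refine forall_congr' fun j => ?_
    rw [map_sub, map_mul, map_mul, aeval_C, Algebra.algebraMap_self_apply, ← sub_mul]
  have heig : ∀ (i : Fin r) (u : MvPolynomial (Fin n) K),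
      (∀ j, MvPolynomial.aeval (ξ j) u = if i = j then 1 else 0) →
      Ideal.Quotient.mk I u ∈ Module.End.eigenspace M (MvPolynomial.aeval (ξ i) g) := by
    intro i u hu
    refine (key u _).mpr fun j => ?_
    by_cases h : i = j
    · subst h; rw [sub_self, zero_mul]
    · rw [hu j, if_neg h, mul_zero]
  have hne0 : ∀ (i : Fin r) (u : MvPolynomial (Fin n) K),
      (∀ j, MvPolynomial.aeval (ξ j) u = if i = j then 1 else 0) →
      Ideal.Quotient.mk I u ≠ 0 := by
    intro i u hu h
    have := (memI u).mp (Ideal.Quotient.eq_zero_iff_mem.mp h) i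
    rw [hu i, if_pos rfl] at this
    exact one_ne_zero this
  refine ⟨?_, ?_, ?_⟩
  · -- eigenvalues
    intro μ
    constructor
    · intro hμ
      obtain ⟨x, hx⟩ := hμ.exists_hasEigenvector
      obtain ⟨p, rfl⟩ := Ideal.Quotient.mk_surjective x
      have hp : ∃ i, MvPolynomial.aeval (ξ i) p ≠ 0 := by
        by_contra h
        push_neg at h
        exact hx.2 (Ideal.Quotient.eq_zero_iff_mem.mpr ((memI p).mpr h))
      obtain ⟨i, hi⟩ := hp
      have h1 := (key p μ).mp hx.1 i
      rcases mul_eq_zero.mp h1 with h | h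
      · exact ⟨i, (sub_eq_zero.mp h).symm⟩
      · exact absurd h hi
    · rintro ⟨i, rfl⟩
      exact Module.End.hasEigenvalue_of_hasEigenvector
        ⟨heig i (u0 i) (hu0 i), hne0 i (u0 i) (hu0 i)⟩
  · -- diagonalizable
    rw [eq_top_iff]
    intro x _
    obtain ⟨p, rfl⟩ := Ideal.Quotient.mk_surjective x
    have hdecomp : Ideal.Quotient.mk I p
        = ∑ i, MvPolynomial.aeval (ξ i) p • Ideal.Quotient.mk I (u0 i) := by
      have hmem : p - ∑ i, MvPolynomial.aeval (ξ i) p • u0 i ∈ I := by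
        refine (memI _).mpr fun j => ?_
        rw [map_sub, map_sum]
        have : (∑ i, MvPolynomial.aeval (ξ j) (MvPolynomial.aeval (ξ i) p • u0 i))
            = MvPolynomial.aeval (ξ j) p := by
          rw [Finset.sum_eq_single j]
          · rw [map_smul, hu0 j j, if_pos rfl, smul_eq_mul, mul_one]
          · intro i _ hij
            rw [map_smul, hu0 i j, if_neg hij, smul_zero]
          · intro h; exact absurd (Finset.mem_univ j) h
        rw [this, sub_self]
      have h2 := Ideal.Quotient.eq.mpr hmem
      rw [h2, map_sum (Ideal.Quotient.mk I) (fun i => MvPolynomial.aeval (ξ i) p • u0 i)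
        Finset.univ]
      rfl
    rw [hdecomp]
    refine Submodule.sum_mem _ fun i _ => Submodule.smul_mem _ _ ?_
    exact Submodule.mem_iSup_of_mem (MvPolynomial.aeval (ξ i) g) (heig i (u0 i) (hu0 i))
  · -- eigenspaces
    intro i u hu
    apply le_antisymm
    · intro x hx
      obtain ⟨p, rfl⟩ := Ideal.Quotient.mk_surjective x
      have hj : ∀ j, j ≠ i → MvPolynomial.aeval (ξ j) p = 0 := by
        intro j hji
        have h1 := (key p _).mp hx j
        rcases mul_eq_zero.mp h1 with h | h
        · exact absurd (sub_eq_zero.mp h) (hg j i hji)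
        · exact h
      have hrepr : Ideal.Quotient.mk I p
          = MvPolynomial.aeval (ξ i) p • Ideal.Quotient.mk I u := by
        have hsm : MvPolynomial.aeval (ξ i) p • Ideal.Quotient.mk I u
            = Ideal.Quotient.mk I (MvPolynomial.aeval (ξ i) p • u) := rfl
        rw [hsm, Ideal.Quotient.eq]
        refine (memI _).mpr fun j => ?_
        rw [map_sub, map_smul]
        by_cases h : i = j
        · subst h
          rw [hu i, if_pos rfl, smul_eq_mul, mul_one, sub_self]
        · rw [hu j, if_neg h, smul_zero, hj j (fun h' => h h'.symm), sub_zero]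
      rw [hrepr]
      exact Submodule.smul_mem _ _ (Submodule.mem_span_singleton_self _)
    · rw [Submodule.span_singleton_le_iff_mem]
      exact heig i u hu
end

section
/- Let 𝕂 be a field of characteristic 0 and σ = Σ_{i=1}^{r} ωᵢ e_{ξᵢ} with ωᵢ ∈ 𝕂 ∖ {0} and ξ₁,…,ξ_r ∈ 𝕂ⁿ pairwise distinct. Then there exist polynomials u₁,…,u_r ∈ 𝕂[x] with uᵢ(ξⱼ) = δ_{ij}; for any such polynomials, their classes form a basis of A_σ which is orthogonal for the inner product ⟨p,q⟩_σ = σ(p·q), with σ(uᵢ·uⱼ) = δ_{ij} ωᵢ and σ(uᵢ) = ωᵢ for all i, j. -/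
/-! The interpolation polynomials `uᵢ` make `p ↦ Σᵢ p(ξᵢ) uᵢ` a projection whose defect
`p - Σᵢ p(ξᵢ) uᵢ` vanishes at every `ξⱼ`, hence lies in `I_σ`; so the classes of the `uᵢ` span
`A_σ`. Since `σ` only sees the values at the `ξⱼ`, `σ(uᵢ uⱼ) = δᵢⱼ ωᵢ`, and this orthogonality
with nonzero `ωᵢ` forces linear independence modulo `I_σ`. -/

open MvPolynomial

namespace PolyExp

variable {K : Type*} [Field K] {n : ℕ} {ι : Type*} [Fintype ι]

theorem exists_aeval_eq_one_aeval_eq_zero {τ : Type*} {a b : τ → K} (hab : a ≠ b) :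
    ∃ p : MvPolynomial τ K, aeval a p = 1 ∧ aeval b p = 0 := by
  obtain ⟨k, hk⟩ := Function.ne_iff.mp hab
  refine ⟨C (a k - b k)⁻¹ * (X k - C (b k)), ?_, ?_⟩ <;> simp [sub_ne_zero.mpr hk]

theorem sum_smul_evalDual_apply (ω : ι → K) (ξ : ι → Fin n → K) (p : MvPolynomial (Fin n) K) :
    (∑ i, ω i • evalDual (ξ i)) p = ∑ i, ω i * aeval (ξ i) p := by
  simp [evalDual]

variable [DecidableEq ι]

theorem exists_aeval_eq_ite {τ : Type*} {ξ : ι → τ → K} (hξ : Function.Injective ξ) :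
    ∃ u : ι → MvPolynomial τ K, ∀ i j, aeval (ξ j) (u i) = if i = j then 1 else 0 := by
  have hsep : ∀ i j, ∃ p : MvPolynomial τ K, i ≠ j → aeval (ξ i) p = 1 ∧ aeval (ξ j) p = 0 := by
    intro i j
    by_cases hij : i = j
    · exact ⟨0, fun h => absurd hij h⟩
    · exact (exists_aeval_eq_one_aeval_eq_zero (hξ.ne hij)).imp fun _ hp _ => hp
  choose p hp using hsep
  refine ⟨fun i => ∏ k ∈ Finset.univ.erase i, p i k, fun i j => ?_⟩
  rw [map_prod]
  split_ifs with hij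
  · subst hij
    exact Finset.prod_eq_one fun k hk => (hp i k (Finset.ne_of_mem_erase hk).symm).1
  · exact Finset.prod_eq_zero (Finset.mem_erase.mpr ⟨Ne.symm hij, Finset.mem_univ j⟩)
      (hp i j hij).2

theorem mem_hankelKer_iff {σ : Module.Dual K (MvPolynomial (Fin n) K)}
    {p : MvPolynomial (Fin n) K} :
    p ∈ hankelKer σ ↔ ∀ q, σ (p * q) = 0 :=
  Iff.rfl

theorem linearIndependent_mk_hankelKer {σ : Module.Dual K (MvPolynomial (Fin n) K)}
    {u : ι → MvPolynomial (Fin n) K} {ω : ι → K} (hω : ∀ i, ω i ≠ 0)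
    (horth : ∀ i j, σ (u i * u j) = if i = j then ω i else 0) :
    LinearIndependent K fun i => Ideal.Quotient.mk (hankelKer σ) (u i) := by
  rw [Fintype.linearIndependent_iff]
  intro g hg j
  have hker : ∑ i, g i • u i ∈ hankelKer σ := by
    rw [← Ideal.Quotient.eq_zero_iff_mem, ← hg, map_sum]
    simp only [← Ideal.Quotient.mkₐ_eq_mk (R₁ := K), map_smul]
  have hj := mem_hankelKer_iff.mp hker (u j)
  simp only [Finset.sum_mul, map_sum, smul_mul_assoc, map_smul, horth, smul_eq_mul, mul_ite,
    mul_zero, Finset.sum_ite_eq', Finset.mem_univ, if_true] at hj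
  exact (mul_eq_zero.mp hj).resolve_right (hω j)

section Interpolation

variable {ξ : ι → Fin n → K} (ω : ι → K) {u : ι → MvPolynomial (Fin n) K}
  (hu : ∀ i j, aeval (ξ j) (u i) = if i = j then 1 else 0)
include hu

theorem sum_smul_evalDual_mul_eq_ite (i j : ι) :
    (∑ k, ω k • evalDual (ξ k)) (u i * u j) = if i = j then ω i else 0 := by
  simp only [sum_smul_evalDual_apply, map_mul, hu, mul_ite, mul_one, mul_zero]
  split_ifs with hij
  · subst hij
    simp
  · simp [hij]

theorem sum_smul_evalDual_eq (i : ι) : (∑ k, ω k • evalDual (ξ k)) (u i) = ω i := by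
  simp [sum_smul_evalDual_apply, hu]

theorem sub_sum_aeval_smul_mem_hankelKer (p : MvPolynomial (Fin n) K) :
    p - ∑ i, aeval (ξ i) p • u i ∈ hankelKer (∑ k, ω k • evalDual (ξ k)) := by
  have hvanish : ∀ k, aeval (ξ k) (p - ∑ i, aeval (ξ i) p • u i) = 0 := fun k => by
    simp only [map_sub, map_sum, map_smul, hu, smul_eq_mul, mul_ite, mul_one, mul_zero,
      Finset.sum_ite_eq', Finset.mem_univ, if_true, sub_self]
  intro q
  simp only [sum_smul_evalDual_apply, map_mul, hvanish, zero_mul, mul_zero, Finset.sum_const_zero]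

theorem span_mk_hankelKer_eq_top :
    Submodule.span K (Set.range fun i => Ideal.Quotient.mk (hankelKer (∑ k, ω k • evalDual (ξ k)))
      (u i)) = ⊤ := by
  rw [Submodule.eq_top_iff']
  intro x
  obtain ⟨p, rfl⟩ := Ideal.Quotient.mk_surjective x
  rw [Ideal.Quotient.eq.mpr (sub_sum_aeval_smul_mem_hankelKer ω hu p)]
  simp only [← Ideal.Quotient.mkₐ_eq_mk (R₁ := K), map_sum, map_smul]
  exact Submodule.sum_mem _ fun i _ => Submodule.smul_mem _ _ (Submodule.subset_span ⟨i, rfl⟩)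

end Interpolation

end PolyExp

theorem statement13_general {K : Type*} [Field K] {n : ℕ}
    (r : ℕ) (ξ : Fin r → Fin n → K) (hξ : Function.Injective ξ)
    (ω : Fin r → K) (hω : ∀ i, ω i ≠ 0)
    (σ : Module.Dual K (MvPolynomial (Fin n) K))
    (hσ : σ = ∑ i, ω i • PolyExp.evalDual (ξ i)) :
    (∃ u : Fin r → MvPolynomial (Fin n) K,
      ∀ i j, MvPolynomial.aeval (ξ j) (u i) = if i = j then 1 else 0) ∧
    (∀ u : Fin r → MvPolynomial (Fin n) K,
      (∀ i j, MvPolynomial.aeval (ξ j) (u i) = if i = j then 1 else 0) →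
      LinearIndependent K (fun i => Ideal.Quotient.mk (PolyExp.hankelKer σ) (u i)) ∧
      Submodule.span K (Set.range fun i => Ideal.Quotient.mk (PolyExp.hankelKer σ) (u i)) = ⊤ ∧
      (∀ i j, σ (u i * u j) = if i = j then ω i else 0) ∧
      (∀ i, σ (u i) = ω i)) := by
  subst hσ
  refine ⟨PolyExp.exists_aeval_eq_ite hξ, fun u hu => ?_⟩
  have horth := PolyExp.sum_smul_evalDual_mul_eq_ite ω hu
  exact ⟨PolyExp.linearIndependent_mk_hankelKer hω horth,
    PolyExp.span_mk_hankelKer_eq_top ω hu, horth, PolyExp.sum_smul_evalDual_eq ω hu⟩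

/-- If `σ = Σᵢ ωᵢ e_{ξᵢ}` with nonzero scalar weights and pairwise
distinct points, then interpolation polynomials `uᵢ` with `uᵢ(ξⱼ) = δᵢⱼ` exist; the
classes of any such `u₁,…,u_r` form a basis of `A_σ`, orthogonal for `⟨p,q⟩_σ = σ(pq)`,
with `σ(uᵢuⱼ) = δᵢⱼ ωᵢ` and `σ(uᵢ) = ωᵢ`. -/
theorem statement13 {K : Type*} [Field K] [CharZero K] {n : ℕ}
    (r : ℕ) (ξ : Fin r → Fin n → K) (hξ : Function.Injective ξ)
    (ω : Fin r → K) (hω : ∀ i, ω i ≠ 0)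
    (σ : Module.Dual K (MvPolynomial (Fin n) K))
    (hσ : σ = ∑ i, ω i • PolyExp.evalDual (ξ i)) :
    (∃ u : Fin r → MvPolynomial (Fin n) K,
      ∀ i j, MvPolynomial.aeval (ξ j) (u i) = if i = j then 1 else 0) ∧
    (∀ u : Fin r → MvPolynomial (Fin n) K,
      (∀ i j, MvPolynomial.aeval (ξ j) (u i) = if i = j then 1 else 0) →
      LinearIndependent K (fun i => Ideal.Quotient.mk (PolyExp.hankelKer σ) (u i)) ∧
      Submodule.span K (Set.range fun i => Ideal.Quotient.mk (PolyExp.hankelKer σ) (u i)) = ⊤ ∧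
      (∀ i j, σ (u i * u j) = if i = j then ω i else 0) ∧
      (∀ i, σ (u i) = ω i)) :=
  statement13_general r ξ hξ ω hω σ hσ
end

section
/- Let 𝕂 be a field of characteristic 0 and σ = Σ_{i=1}^{r} ωᵢ e_{ξᵢ} with ωᵢ ∈ 𝕂 ∖ {0} and ξ₁,…,ξ_r ∈ 𝕂ⁿ pairwise distinct, and let g ∈ 𝕂[x] satisfy g(ξᵢ) ≠ g(ξⱼ) for i ≠ j. If v ∈ 𝕂[x] is a polynomial whose class in A_σ is nonzero and is an eigenvector of the multiplication operator M_g for the eigenvalue g(ξᵢ), then: (a) σ(xⱼ·v) = ξ_{i,j}·σ(v) for j = 1,…,n, where ξᵢ = (ξ_{i,1},…,ξ_{i,n}); (b) v(ξᵢ) ≠ 0 and ωᵢ = σ(v)/v(ξᵢ). -/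
open MvPolynomial

/-- Let `σ = Σᵢ ωᵢ e_{ξᵢ}` (nonzero scalar weights, distinct points)
and `g` separating.  If the class of `v` in `A_σ` is a nonzero eigenvector of `M_g` for
the eigenvalue `g(ξᵢ)`, then (a) `σ(xⱼ·v) = ξ_{i,j}·σ(v)` for all `j`; (b) `v(ξᵢ) ≠ 0`
and `ωᵢ = σ(v)/v(ξᵢ)`. -/
theorem statement14 {K : Type*} [Field K] [CharZero K] {n : ℕ}
    (r : ℕ) (ξ : Fin r → Fin n → K) (hξ : Function.Injective ξ)
    (ω : Fin r → K) (hω : ∀ i, ω i ≠ 0)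
    (σ : Module.Dual K (MvPolynomial (Fin n) K))
    (hσ : σ = ∑ i, ω i • PolyExp.evalDual (ξ i))
    (g : MvPolynomial (Fin n) K)
    (hg : ∀ i j, i ≠ j → MvPolynomial.aeval (ξ i) g ≠ MvPolynomial.aeval (ξ j) g)
    (i : Fin r) (v : MvPolynomial (Fin n) K)
    (hv0 : Ideal.Quotient.mk (PolyExp.hankelKer σ) v ≠ 0)
    (hveig : Ideal.Quotient.mk (PolyExp.hankelKer σ) (g * v) =
      MvPolynomial.aeval (ξ i) g • Ideal.Quotient.mk (PolyExp.hankelKer σ) v) :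
    (∀ j : Fin n, σ (MvPolynomial.X j * v) = ξ i j * σ v) ∧
    MvPolynomial.aeval (ξ i) v ≠ 0 ∧
    ω i = σ v / MvPolynomial.aeval (ξ i) v := by
  classical
  set lam := MvPolynomial.aeval (ξ i) g with hlam
  have hσp : ∀ p, σ p = ∑ k, ω k * MvPolynomial.aeval (ξ k) p := by
    intro p
    rw [hσ]
    simp [PolyExp.evalDual, smul_eq_mul]
  -- membership of (g - lam) v in the kernel ideal
  have hmem : (g * v - lam • v) ∈ PolyExp.hankelKer σ := by
    have hsm : Ideal.Quotient.mk (PolyExp.hankelKer σ) (lam • v) =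
        lam • Ideal.Quotient.mk (PolyExp.hankelKer σ) v :=
      map_smul (Ideal.Quotient.mkₐ K (PolyExp.hankelKer σ)) lam v
    rw [← Ideal.Quotient.eq_zero_iff_mem, map_sub, hveig, hsm, sub_self]
  have hK : ∀ q, σ ((g * v - lam • v) * q) = 0 := hmem
  -- the values g(ξ k) are injective
  have hginj : Set.InjOn (fun l : Fin r => MvPolynomial.aeval (ξ l) g)
      (Finset.univ : Finset (Fin r)) := by
    intro a _ b _ hab
    by_contra hne
    exact hg a b hne hab
  -- v vanishes at all ξ k for k ≠ i
  have hvzero : ∀ k, k ≠ i → MvPolynomial.aeval (ξ k) v = 0 := by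
    intro k hk
    obtain ⟨q, hqval⟩ : ∃ q : MvPolynomial (Fin n) K,
        ∀ l : Fin r, MvPolynomial.aeval (ξ l) q = if l = k then 1 else 0 := by
      refine ⟨Polynomial.aeval g
        (Lagrange.basis Finset.univ (fun l : Fin r => MvPolynomial.aeval (ξ l) g) k), fun l => ?_⟩
      have heval : MvPolynomial.aeval (ξ l) (Polynomial.aeval g
          (Lagrange.basis Finset.univ (fun l : Fin r => MvPolynomial.aeval (ξ l) g) k)) =
          Polynomial.eval (MvPolynomial.aeval (ξ l) g)
          (Lagrange.basis Finset.univ (fun l : Fin r => MvPolynomial.aeval (ξ l) g) k) := by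
        rw [← Polynomial.aeval_algHom_apply (MvPolynomial.aeval (ξ l)) g,
          Polynomial.aeval_def, Polynomial.eval, Polynomial.eval₂_eq_eval_map,
          Polynomial.eval₂_eq_eval_map]
        simp
      rw [heval]
      by_cases hlk : l = k
      · rw [if_pos hlk, hlk]
        exact Lagrange.eval_basis_self (v := fun l : Fin r => MvPolynomial.aeval (ξ l) g)
          hginj (Finset.mem_univ k)
      · rw [if_neg hlk]
        exact Lagrange.eval_basis_of_ne (v := fun l : Fin r => MvPolynomial.aeval (ξ l) g)
          (Ne.symm hlk) (Finset.mem_univ l)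
    have h0 := hK q
    rw [hσp] at h0
    have hterm : ∀ l : Fin r,
        ω l * MvPolynomial.aeval (ξ l) ((g * v - lam • v) * q) =
        if l = k then ω k * ((MvPolynomial.aeval (ξ k) g - lam) * MvPolynomial.aeval (ξ k) v)
        else 0 := by
      intro l
      rw [map_mul, map_sub, map_mul, map_smul, smul_eq_mul, hqval l]
      by_cases hlk : l = k
      · subst hlk
        rw [if_pos rfl, if_pos rfl]
        ring
      · rw [if_neg hlk, if_neg hlk]
        ring
    rw [Finset.sum_congr rfl (fun l _ => hterm l), Finset.sum_ite_eq'
      (Finset.univ : Finset (Fin r)) k] at h0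
    simp only [Finset.mem_univ, if_true] at h0
    have hgne : MvPolynomial.aeval (ξ k) g - lam ≠ 0 := by
      rw [sub_ne_zero]
      exact hg k i hk
    have := mul_ne_zero (hω k) hgne
    rcases mul_eq_zero.mp h0 with h | h
    · exact absurd h (hω k)
    rcases mul_eq_zero.mp h with h | h
    · exact absurd h hgne
    · exact h
  -- the collapsed formula for σ(v q)
  have hcol : ∀ q, σ (v * q) =
      ω i * (MvPolynomial.aeval (ξ i) v * MvPolynomial.aeval (ξ i) q) := by
    intro q
    rw [hσp]
    rw [Finset.sum_eq_single i]
    · rw [map_mul]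
    · intro k _ hk
      rw [map_mul, hvzero k hk, zero_mul, mul_zero]
    · intro h; exact absurd (Finset.mem_univ i) h
  -- v(ξ i) ≠ 0
  have hvi : MvPolynomial.aeval (ξ i) v ≠ 0 := by
    intro h
    apply hv0
    rw [Ideal.Quotient.eq_zero_iff_mem]
    intro q
    rw [hcol q, h, zero_mul, mul_zero]
  have hσv : σ v = ω i * MvPolynomial.aeval (ξ i) v := by
    have := hcol 1
    rw [mul_one, map_one, mul_one] at this
    exact this
  refine ⟨fun j => ?_, hvi, ?_⟩
  · have := hcol (MvPolynomial.X j)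
    rw [mul_comm v (MvPolynomial.X j)] at this
    rw [this, hσv, MvPolynomial.aeval_X]
    ring
  · rw [hσv, mul_div_assoc, div_self hvi, mul_one]
end
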